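/- arXiv:2308.14684 — 8 statements merged into one kernel-verified Lean document; each statement's English description precedes it below -/
import Mathlib

section
/- Let f : X → Y be a continuous length-connected map from a topological space X to a metric space Y, and let ⟨X⟩_f denote the induced length metric space with projection π̂_f : X → ⟨X⟩_f. Then there exists a unique 1-Lipschitz map f̂ : ⟨X⟩_f → Y such that f̂ ∘ π̂_f = f. -/
open Set Metric ENNReal unitInterval

noncomputable section

/-- The length of a curve parametrized by the unit interval, as total variation. -/
def curveELength {Y : Type*} [PseudoEMetricSpace Y] (c : unitInterval → Y) : ℝ≥0∞ :=
  eVariationOn c Set.univ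

/-- The length pseudodistance induced by a map `f : X → Y`: the infimum of the lengths of
`f ∘ γ` over all curves `γ` joining the two points (`⊤` if there is no such curve). -/
def lengthPd {X Y : Type*} [TopologicalSpace X] [PseudoEMetricSpace Y]
    (f : X → Y) (x z : X) : ℝ≥0∞ :=
  ⨅ γ : Path x z, curveELength (fun t => f (γ t))

/-- `f` is length-connected: the induced length pseudodistance is everywhere finite. -/
def LengthConnected {X Y : Type*} [TopologicalSpace X] [PseudoEMetricSpace Y]
    (f : X → Y) : Prop :=
  ∀ x z : X, lengthPd f x z ≠ ⊤

/-- The connecting pseudodistance induced by `f`: infimum of `diam (f '' C)` over connected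
sets `C` containing both points. -/
def connPd {X Y : Type*} [TopologicalSpace X] [PseudoEMetricSpace Y]
    (f : X → Y) (x z : X) : ℝ≥0∞ :=
  ⨅ C : {C : Set X // IsConnected C ∧ x ∈ C ∧ z ∈ C}, EMetric.diam (f '' (C : Set X))

/-- `g` does not increase the length of any curve, compared with `f`. -/
def IsShorter {X Y : Type*} [TopologicalSpace X] [PseudoEMetricSpace Y]
    (f g : X → Y) : Prop :=
  ∀ c : C(unitInterval, X), curveELength (fun t => g (c t)) ≤ curveELength (fun t => f (c t))

/-- `f` is length-minimizing relative to `Z`: any continuous competitor agreeing with `f`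
on `Z` and not increasing the length of any curve in fact preserves all curve lengths. -/
def LengthMinimizing {X Y : Type*} [TopologicalSpace X] [PseudoEMetricSpace Y]
    (f : X → Y) (Z : Set X) : Prop :=
  Continuous f ∧ ∀ g : X → Y, Continuous g → Set.EqOn f g Z → IsShorter f g →
    ∀ c : C(unitInterval, X), curveELength (fun t => g (c t)) = curveELength (fun t => f (c t))

/-- `γ : ℝ → Y` is a unit-speed geodesic from `x` to `y` (on `[0, dist x y]`). -/
def IsGeodesicParam {Y : Type*} [MetricSpace Y] (γ : ℝ → Y) (x y : Y) : Prop :=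
  γ 0 = x ∧ γ (dist x y) = y ∧
    ∀ s ∈ Set.Icc (0:ℝ) (dist x y), ∀ t ∈ Set.Icc (0:ℝ) (dist x y),
      dist (γ s) (γ t) = |s - t|

/-- A geodesic metric space: any two points are joined by a geodesic. -/
def IsGeodesicSpace (Y : Type*) [MetricSpace Y] : Prop :=
  ∀ x y : Y, ∃ γ : ℝ → Y, IsGeodesicParam γ x y

/-- The diameter `R_κ` of the model surface `M_κ`: `π/√κ` for `κ > 0`, `∞` otherwise. -/
def modelDiam (κ : ℝ) : ℝ≥0∞ :=
  if κ ≤ 0 then ⊤ else ENNReal.ofReal (Real.pi / Real.sqrt κ)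

/-- Cosine of the angle opposite the side of length `c` in a triangle of side lengths
`a`, `b`, `c` in the model plane of curvature `κ` (law of cosines). -/
def modelCosAngle (κ a b c : ℝ) : ℝ :=
  if κ = 0 then (a ^ 2 + b ^ 2 - c ^ 2) / (2 * a * b)
  else if 0 < κ then
    (Real.cos (Real.sqrt κ * c) - Real.cos (Real.sqrt κ * a) * Real.cos (Real.sqrt κ * b)) /
      (Real.sin (Real.sqrt κ * a) * Real.sin (Real.sqrt κ * b))
  else
    (Real.cosh (Real.sqrt (-κ) * a) * Real.cosh (Real.sqrt (-κ) * b) -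
        Real.cosh (Real.sqrt (-κ) * c)) /
      (Real.sinh (Real.sqrt (-κ) * a) * Real.sinh (Real.sqrt (-κ) * b))

/-- Distance in the model plane of curvature `κ` between the endpoints of two segments of
lengths `a` and `b` emanating from a common vertex at an angle with cosine `cosθ`. -/
def modelSideLength (κ a b cosθ : ℝ) : ℝ :=
  if κ = 0 then Real.sqrt (a ^ 2 + b ^ 2 - 2 * a * b * cosθ)
  else if 0 < κ then
    Real.arccos (Real.cos (Real.sqrt κ * a) * Real.cos (Real.sqrt κ * b) +
      Real.sin (Real.sqrt κ * a) * Real.sin (Real.sqrt κ * b) * cosθ) / Real.sqrt κ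
  else
    -- `Real.log (x + √(x² - 1))` is the inverse hyperbolic cosine `arcosh x`
    Real.log ((Real.cosh (Real.sqrt (-κ) * a) * Real.cosh (Real.sqrt (-κ) * b) -
        Real.sinh (Real.sqrt (-κ) * a) * Real.sinh (Real.sqrt (-κ) * b) * cosθ) +
      Real.sqrt ((Real.cosh (Real.sqrt (-κ) * a) * Real.cosh (Real.sqrt (-κ) * b) -
        Real.sinh (Real.sqrt (-κ) * a) * Real.sinh (Real.sqrt (-κ) * b) * cosθ) ^ 2 - 1)) /
      Real.sqrt (-κ)

/-- `Y` is a CAT(κ) space: complete, geodesic, and every geodesic triangle of perimeter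
`< 2 R_κ` satisfies the point-side comparison with its model triangle in `M_κ`. -/
def IsCATSpace (κ : ℝ) (Y : Type*) [MetricSpace Y] : Prop :=
  CompleteSpace Y ∧ IsGeodesicSpace Y ∧
    ∀ p q r : Y, ∀ γ : ℝ → Y, IsGeodesicParam γ p q →
      ENNReal.ofReal (dist p q + dist q r + dist r p) < 2 * modelDiam κ →
      ∀ s ∈ Set.Icc (0:ℝ) (dist p q),
        dist (γ s) r ≤
          modelSideLength κ s (dist p r) (modelCosAngle κ (dist p q) (dist p r) (dist q r))

/-- A set is geodesically convex if every geodesic between its points stays inside it. -/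
def IsGeodesicallyConvex {Y : Type*} [MetricSpace Y] (K : Set Y) : Prop :=
  ∀ x ∈ K, ∀ y ∈ K, ∀ γ : ℝ → Y, IsGeodesicParam γ x y →
    ∀ t ∈ Set.Icc (0:ℝ) (dist x y), γ t ∈ K

/-- A finite graph (connected finite one-dimensional CW complex) structure on a
topological space `Γ`: finitely many edges, injective away from endpoints, with
endpoints in a finite vertex set, covering `Γ`. -/
structure FiniteGraphStruct (Γ : Type*) [TopologicalSpace Γ] where
  n : ℕ
  edge : Fin n → C(unitInterval, Γ)
  vertices : Set Γ
  vertices_finite : vertices.Finite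
  endpoints_mem : ∀ i, edge i 0 ∈ vertices ∧ edge i 1 ∈ vertices
  inj_on : ∀ i, Set.InjOn (edge i) {t : unitInterval | t ≠ 0 ∧ t ≠ 1}
  cover : ∀ x : Γ, x ∈ vertices ∨ ∃ i t, edge i t = x

end

/-- existence and uniqueness of the induced 1-Lipschitz map
`f̂ : ⟨X⟩_f → Y` with `f̂ ∘ π̂_f = f`. -/
theorem exists_unique_induced_lipschitz_map {X Y W : Type*} [TopologicalSpace X]
    [MetricSpace Y] [MetricSpace W] (f : X → Y) (hf : Continuous f)
    (hlc : LengthConnected f) (π : X → W) (hsurj : Function.Surjective π)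
    (hπ : ∀ x z : X, edist (π x) (π z) = lengthPd f x z) :
    ∃! fhat : W → Y, LipschitzWith 1 fhat ∧ fhat ∘ π = f := by
  have key : ∀ x z : X, edist (f x) (f z) ≤ lengthPd f x z := by
    intro x z
    refine le_iInf fun γ => ?_
    calc edist (f x) (f z) = edist ((fun t => f (γ t)) 0) ((fun t => f (γ t)) 1) := by
          simp
      _ ≤ curveELength (fun t => f (γ t)) :=
          eVariationOn.edist_le _ (mem_univ _) (mem_univ _)
  have hcomp : ∀ x z : X, π x = π z → f x = f z := by
    intro x z h
    have h2 : edist (f x) (f z) ≤ 0 := by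
      have := key x z
      rw [← hπ, h, edist_self] at this
      exact this
    simpa using h2
  refine ⟨fun w => f (hsurj w).choose, ⟨?_, ?_⟩, ?_⟩
  · intro w w'
    have hw := (hsurj w).choose_spec
    have hw' := (hsurj w').choose_spec
    calc edist (f (hsurj w).choose) (f (hsurj w').choose)
        ≤ lengthPd f (hsurj w).choose (hsurj w').choose := key _ _
      _ = edist (π (hsurj w).choose) (π (hsurj w').choose) := (hπ _ _).symm
      _ = edist w w' := by rw [hw, hw']
      _ ≤ 1 * edist w w' := by simp
  · funext x
    exact hcomp _ _ (hsurj (π x)).choose_spec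
  · rintro g ⟨hg, hgc⟩
    funext w
    obtain ⟨x, rfl⟩ := hsurj w
    have hx : g (π x) = f x := congrFun hgc x
    rw [hx]
    exact (hcomp _ _ (hsurj (π x)).choose_spec).symm
end

section
/- Let f : X → Y be a continuous length-connected map and γ a curve in X. If f ∘ γ has finite length in Y, then π̂_f ∘ γ is a continuous curve of finite length in ⟨X⟩_f and ℓ_Y(f ∘ γ) = ℓ_{⟨X⟩_f}(π̂_f ∘ γ). Conversely, if π̂_f ∘ γ is a curve of finite length in ⟨X⟩_f, then f ∘ γ has finite length and the same equality of lengths holds. -/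
open Set Metric ENNReal unitInterval

/-!
Two comparisons drive the proof. Since any curve joining `x` to `z` has `f`-length at least
`d(f x, f z)`, the projection satisfies `d(f x, f z) ≤ d(π x, π z)`; and since the arc of `γ`
between `a ≤ b` is one such curve, `d(π (γ a), π (γ b))` is at most the variation of `f ∘ γ`
on `[a, b]`. Summing either bound over a partition compares the two lengths in both directions.
When `f ∘ γ` is continuous of finite length, its variation on short intervals around a point
tends to `0`, and the second bound makes `π ∘ γ` continuous.
-/

open Filter

section Variation

variable {α E F : Type*} [LinearOrder α] [PseudoEMetricSpace E] [PseudoEMetricSpace F]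

theorem eVariationOn_le_of_edist_le_eVariationOn_Icc {f : α → E} {g : α → F} {s : Set α}
    (h : ∀ a ∈ s, ∀ b ∈ s, a ≤ b → edist (g a) (g b) ≤ eVariationOn f (s ∩ Icc a b)) :
    eVariationOn g s ≤ eVariationOn f s := by
  refine iSup_le fun ⟨n, u, hu, us⟩ => ?_
  calc ∑ i ∈ Finset.range n, edist (g (u (i + 1))) (g (u i))
      ≤ ∑ i ∈ Finset.range n, eVariationOn f (s ∩ Icc (u i) (u (i + 1))) :=
        Finset.sum_le_sum fun i _ => by
          rw [edist_comm]; exact h _ (us i) _ (us (i + 1)) (hu i.le_succ)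
    _ = eVariationOn f (s ∩ Icc (u 0) (u n)) := eVariationOn.sum f hu fun i _ _ => us i
    _ ≤ eVariationOn f s := eVariationOn.mono f inter_subset_left

theorem ContinuousOn.of_edist_le_eVariationOn_Icc [TopologicalSpace α] [OrderTopology α]
    {f : α → E} {g : α → F} {s : Set α} (hf : ContinuousOn f s) (hbv : BoundedVariationOn f s)
    (h : ∀ a ∈ s, ∀ b ∈ s, a ≤ b → edist (g a) (g b) ≤ eVariationOn f (s ∩ Icc a b)) :
    ContinuousOn g s := by
  intro x hx
  have hleft := hbv.tendsto_eVariationOn_Icc_zero_left ((hf x hx).mono inter_subset_left)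
  have hright := hbv.tendsto_eVariationOn_Icc_zero_right x ((hf x hx).mono inter_subset_left)
  refine tendsto_iff_edist_tendsto_0.2 <| tendsto_of_tendsto_of_tendsto_of_le_of_le'
    tendsto_const_nhds (by simpa using hleft.add hright) (Eventually.of_forall fun _ => zero_le)
    (eventually_nhdsWithin_of_forall fun y hy => ?_)
  rcases le_total y x with hyx | hxy
  · exact (h y hy x hx hyx).trans le_self_add
  · exact (edist_comm _ _).trans_le ((h x hx y hy hxy).trans le_add_self)

end Variation

theorem Set.Icc.monotone_convexComb {a b : ℝ} {x y : Icc a b} (hxy : x ≤ y) :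
    Monotone (Icc.convexComb x y) := by
  intro s t hst
  change (1 - (s : ℝ)) * x + s * y ≤ (1 - (t : ℝ)) * x + t * y
  have : (x : ℝ) ≤ y := hxy
  have : (s : ℝ) ≤ t := hst
  nlinarith

section LengthPd

variable {X Y : Type*} [TopologicalSpace X] [PseudoEMetricSpace Y]

theorem edist_le_lengthPd (f : X → Y) (x z : X) : edist (f x) (f z) ≤ lengthPd f x z :=
  le_iInf fun γ => by
    simpa [curveELength] using
      eVariationOn.edist_le (fun t => f (γ t)) (mem_univ (0 : unitInterval)) (mem_univ 1)

theorem lengthPd_le_eVariationOn_Icc (f : X → Y) (γ : C(unitInterval, X)) {s t : unitInterval}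
    (hst : s ≤ t) : lengthPd f (γ s) (γ t) ≤ eVariationOn (fun u => f (γ u)) (Icc s t) := by
  let p : Path (γ 0) (γ 1) := ⟨γ, rfl, rfl⟩
  refine (iInf_le _ (p.subpath s t)).trans_eq ?_
  rw [curveELength, ← uIcc_of_le hst, ← Path.range_subpathAux, ← image_univ]
  exact eVariationOn.comp_eq_of_monotoneOn (fun u => f (γ u)) _
    ((Icc.monotone_convexComb hst).monotoneOn _)

end LengthPd

theorem lengthPd_projection_preserves_length_general {X Y W : Type*} [TopologicalSpace X]
    [MetricSpace Y] [MetricSpace W] (f : X → Y) (hf : Continuous f)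
    (π : X → W)
    (hπ : ∀ x z : X, edist (π x) (π z) = lengthPd f x z)
    (γ : C(unitInterval, X)) :
    (curveELength (fun t => f (γ t)) ≠ ⊤ →
      Continuous (fun t => π (γ t)) ∧
      curveELength (fun t => f (γ t)) = curveELength (fun t => π (γ t))) ∧
    ((Continuous (fun t => π (γ t)) ∧ curveELength (fun t => π (γ t)) ≠ ⊤) →
      curveELength (fun t => f (γ t)) ≠ ⊤ ∧
      curveELength (fun t => f (γ t)) = curveELength (fun t => π (γ t))) := by
  have hπγ : ∀ a ∈ univ, ∀ b ∈ univ, a ≤ b →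
      edist (π (γ a)) (π (γ b)) ≤ eVariationOn (fun u => f (γ u)) (univ ∩ Icc a b) :=
    fun a _ b _ hab => by rw [hπ, univ_inter]; exact lengthPd_le_eVariationOn_Icc f γ hab
  have hfγ : ∀ a ∈ univ, ∀ b ∈ univ, a ≤ b →
      edist (f (γ a)) (f (γ b)) ≤ eVariationOn (fun u => π (γ u)) (univ ∩ Icc a b) :=
    fun a _ b _ hab => calc
      edist (f (γ a)) (f (γ b)) ≤ edist (π (γ a)) (π (γ b)) := hπ _ _ ▸ edist_le_lengthPd f _ _
      _ ≤ eVariationOn (fun u => π (γ u)) (univ ∩ Icc a b) :=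
        eVariationOn.edist_le _ ⟨trivial, le_rfl, hab⟩ ⟨trivial, hab, le_rfl⟩
  have heq : curveELength (fun t => f (γ t)) = curveELength (fun t => π (γ t)) :=
    le_antisymm (eVariationOn_le_of_edist_le_eVariationOn_Icc hfγ)
      (eVariationOn_le_of_edist_le_eVariationOn_Icc hπγ)
  refine ⟨fun hfin => ⟨?_, heq⟩, fun ⟨_, hfin⟩ => ⟨heq ▸ hfin, heq⟩⟩
  exact continuousOn_univ.1 <|
    (hf.comp γ.continuous).continuousOn.of_edist_le_eVariationOn_Icc hfin hπγ

/-- lengths of curves are preserved by the projection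
`π̂_f : X → ⟨X⟩_f`. -/
theorem lengthPd_projection_preserves_length {X Y W : Type*} [TopologicalSpace X]
    [MetricSpace Y] [MetricSpace W] (f : X → Y) (hf : Continuous f)
    (hlc : LengthConnected f) (π : X → W) (hsurj : Function.Surjective π)
    (hπ : ∀ x z : X, edist (π x) (π z) = lengthPd f x z)
    (γ : C(unitInterval, X)) :
    (curveELength (fun t => f (γ t)) ≠ ⊤ →
      Continuous (fun t => π (γ t)) ∧
      curveELength (fun t => f (γ t)) = curveELength (fun t => π (γ t))) ∧
    ((Continuous (fun t => π (γ t)) ∧ curveELength (fun t => π (γ t)) ≠ ⊤) →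
      curveELength (fun t => f (γ t)) ≠ ⊤ ∧
      curveELength (fun t => f (γ t)) = curveELength (fun t => π (γ t))) :=
  lengthPd_projection_preserves_length_general f hf π hπ γ
end

section
/- Let X be a compact metric space, Y a metric space, and f : X → Y continuous. Then f is length-continuous (i.e., the projection π̂_f : X → ⟨X⟩_f is continuous) if and only if for every ε > 0 there exists δ > 0 such that any pair of points x, z ∈ X with d_X(x,z) < δ can be joined by a curve γ in X with ℓ_Y(f ∘ γ) < ε. -/
open Set Metric ENNReal unitInterval

/-- for a compact metric space `X`, length-continuity of `f` (continuity of
`π̂_f`) is equivalent to the uniform small-curve condition. -/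
theorem lengthContinuous_iff_uniform_small_curves {X Y W : Type*} [MetricSpace X]
    [CompactSpace X] [MetricSpace Y] [MetricSpace W] (f : X → Y) (hf : Continuous f)
    (hlc : LengthConnected f) (π : X → W) (hsurj : Function.Surjective π)
    (hπ : ∀ x z : X, edist (π x) (π z) = lengthPd f x z) :
    Continuous π ↔
      ∀ ε : ℝ≥0∞, 0 < ε → ∃ δ : ℝ, 0 < δ ∧ ∀ x z : X, dist x z < δ →
        ∃ γ : Path x z, curveELength (fun t => f (γ t)) < ε := by
  constructor
  · intro hcont ε hε
    have huc : UniformContinuous π := CompactSpace.uniformContinuous_of_continuous hcont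
    obtain ⟨r, hr0, hrε⟩ : ∃ r : ℝ, 0 < r ∧ ENNReal.ofReal r ≤ ε := by
      rcases eq_or_ne ε ⊤ with h | h
      · exact ⟨1, one_pos, by simp [h]⟩
      · exact ⟨ε.toReal, ENNReal.toReal_pos hε.ne' h, by simp [ENNReal.ofReal_toReal h]⟩
    obtain ⟨δ, hδ0, hδ⟩ := Metric.uniformContinuous_iff.mp huc r hr0
    refine ⟨δ, hδ0, fun x z hxz => ?_⟩
    have hlt : edist (π x) (π z) < ε := by
      rw [edist_dist]
      calc ENNReal.ofReal (dist (π x) (π z)) < ENNReal.ofReal r :=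
            (ENNReal.ofReal_lt_ofReal_iff hr0).mpr (hδ hxz)
        _ ≤ ε := hrε
    rw [hπ] at hlt
    exact iInf_lt_iff.mp hlt
  · intro h
    refine UniformContinuous.continuous (EMetric.uniformContinuous_iff.mpr fun ε hε => ?_)
    obtain ⟨δ, hδ0, hδ⟩ := h ε hε
    refine ⟨ENNReal.ofReal δ, by simpa using hδ0, fun {z x} hz => ?_⟩
    have hdz : dist z x < δ := by
      rw [edist_dist] at hz
      exact (ENNReal.ofReal_lt_ofReal_iff hδ0).mp hz
    obtain ⟨γ, hγ⟩ := hδ z x hdz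
    calc edist (π z) (π x) = lengthPd f z x := hπ z x
      _ ≤ curveELength (fun t => f (γ t)) := iInf_le _ γ
      _ < ε := hγ
end

section
/- Let X be a length metric space, Y a metric space, and f : X → Y locally Lipschitz continuous. If X is connected and rectifiably path connected, then f is length-continuous: the induced projection π̂_f : X → ⟨X⟩_f is continuous. -/
open Set Metric ENNReal unitInterval

/-! A curve from `x` of length `< r` stays in the ball `eball x r`, so where `f` is `K`-Lipschitz
on that ball the `f`-length of the curve is at most `K` times its length. As `X` is a length space,
this gives `lengthPd f x z → 0` as `z → x`, which is the continuity of `π`. It also makes the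
classes of the equivalence relation `lengthPd f x z ≠ ⊤` open, so by connectedness there is
only one. -/

open Filter Topology

section LengthPd

variable {X Y : Type*} [TopologicalSpace X] [PseudoEMetricSpace Y]

lemma curveELength_symm (f : X → Y) {x z : X} (γ : Path x z) :
    curveELength (fun t => f (γ.symm t)) = curveELength (fun t => f (γ t)) := by
  have hσ : AntitoneOn σ univ := fun _ _ _ _ hab => symm_le_symm.2 hab
  have h := eVariationOn.comp_eq_of_antitoneOn (fun t => f (γ t)) σ hσ
  rwa [image_univ_of_surjective symm_involutive.surjective] at h

lemma eVariationOn_comp_extend_le (f : X → Y) {x z : X} (γ : Path x z) {g : I → ℝ}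
    (hg : Monotone g) (s : Set I) :
    eVariationOn (fun t => f (γ.extend (g t))) s ≤ curveELength (fun t => f (γ t)) :=
  eVariationOn.comp_le_of_monotoneOn (fun t => f (γ t)) _
    (((monotone_projIcc zero_le_one).comp hg).monotoneOn _) (mapsTo_univ _ _)

lemma curveELength_trans_le (f : X → Y) {x y z : X} (γ : Path x y) (η : Path y z) :
    curveELength (fun t => f (γ.trans η t)) ≤
      curveELength (fun t => f (γ t)) + curveELength (fun t => f (η t)) := by
  let h : I := ⟨1 / 2, by norm_num, by norm_num⟩
  rw [curveELength, ← Iic_union_Ici (a := h), eVariationOn.union _ isGreatest_Iic isLeast_Ici]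
  gcongr
  · rw [eVariationOn.eq_of_eqOn fun t (ht : t ∈ Iic h) => by
      rw [← Path.extend_extends', Path.extend_trans_of_le_half _ _ ht]]
    exact eVariationOn_comp_extend_le f γ (fun a b hab => by simpa using hab) _
  · rw [eVariationOn.eq_of_eqOn fun t (ht : t ∈ Ici h) => by
      rw [← Path.extend_extends', Path.extend_trans_of_half_le _ _ ht]]
    exact eVariationOn_comp_extend_le f η (fun a b hab => by simpa using hab) _

lemma lengthPd_comm (f : X → Y) (x z : X) : lengthPd f z x = lengthPd f x z := by
  rw [lengthPd, lengthPd, ← Path.symm_bijective.surjective.iInf_comp]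
  simp only [curveELength_symm]

lemma lengthPd_triangle (f : X → Y) (x y z : X) :
    lengthPd f x z ≤ lengthPd f x y + lengthPd f y z := by
  simp only [lengthPd, ENNReal.iInf_add, ENNReal.add_iInf]
  exact le_iInf₂ fun η γ => (iInf_le _ (γ.trans η)).trans (curveELength_trans_le f γ η)

lemma lengthConnected_of_tendsto_lengthPd [PreconnectedSpace X]
    {f : X → Y} (hf : ∀ x, Tendsto (lengthPd f x) (𝓝 x) (𝓝 0)) : LengthConnected f := by
  refine PreconnectedSpace.induction₂' (fun x z => lengthPd f x z ≠ ⊤) (fun x => ?_)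
    ⟨fun x y z hxy hyz => ne_top_of_le_ne_top (add_ne_top.2 ⟨hxy, hyz⟩)
      (lengthPd_triangle f x y z)⟩
  filter_upwards [(hf x).eventually (gt_mem_nhds zero_lt_top)] with z hz
  exact ⟨hz.ne, lengthPd_comm f x z ▸ hz.ne⟩

end LengthPd

section Lipschitz

variable {X Y : Type*} [PseudoEMetricSpace X] [PseudoEMetricSpace Y]

lemma lengthPd_le_mul_curveELength {f : X → Y} {K : NNReal} {x z : X} {r : ℝ≥0∞}
    (hf : LipschitzOnWith K f (eball x r)) (γ : Path x z)
    (hγ : curveELength (fun t => γ t) < r) :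
    lengthPd f x z ≤ K * curveELength (fun t => γ t) := by
  refine iInf_le_of_le γ (hf.comp_eVariationOn_le fun t _ => ?_)
  have h := eVariationOn.edist_le (fun t => γ t) (mem_univ 0) (mem_univ t)
  rw [γ.source] at h
  exact mem_eball'.2 (h.trans_lt hγ)

lemma LocallyLipschitz.tendsto_lengthPd {f : X → Y} (hf : LocallyLipschitz f) {x : X}
    (hx : Tendsto (lengthPd id x) (𝓝 x) (𝓝 0)) : Tendsto (lengthPd f x) (𝓝 x) (𝓝 0) := by
  obtain ⟨K, t, ht, hK⟩ := hf x
  obtain ⟨r, hr, hrt⟩ := EMetric.mem_nhds_iff.1 ht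
  refine ENNReal.tendsto_nhds_zero.2 fun ε hε => ?_
  have hc : 0 < min r (ε / (K + 1)) := lt_min hr (ENNReal.div_pos hε.ne' (by simp))
  filter_upwards [hx.eventually (gt_mem_nhds hc)] with z hz
  obtain ⟨γ, hγ⟩ := iInf_lt_iff.1 hz
  calc lengthPd f x z ≤ K * curveELength (fun t => γ t) :=
        lengthPd_le_mul_curveELength (hK.mono hrt) γ (hγ.trans_le (min_le_left _ _))
    _ ≤ (K + 1) * (ε / (K + 1)) := by
        gcongr
        · exact le_self_add
        · exact (hγ.trans_le (min_le_right _ _)).le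
    _ = ε := ENNReal.mul_div_cancel (by simp) (by simp)

end Lipschitz

theorem locallyLipschitz_lengthContinuous_general {X Y : Type*} [MetricSpace X] [MetricSpace Y]
    [ConnectedSpace X]
    (hlength : ∀ x z : X, edist x z = lengthPd (id : X → X) x z)
    (f : X → Y) (hf : LocallyLipschitz f)
    {W : Type*} [MetricSpace W] (π : X → W)
    (hπ : ∀ x z : X, edist (π x) (π z) = lengthPd f x z) :
    LengthConnected f ∧ Continuous π := by
  have hf₀ : ∀ x, Tendsto (lengthPd f x) (𝓝 x) (𝓝 0) := fun x => by
    have hid : lengthPd id x = fun z => edist x z := funext fun z => (hlength x z).symm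
    exact hf.tendsto_lengthPd <|
      hid ▸ (continuous_const.edist continuous_id).tendsto' x 0 (edist_self x)
  refine ⟨lengthConnected_of_tendsto_lengthPd hf₀, continuous_iff_continuousAt.2 fun x => ?_⟩
  rw [ContinuousAt, tendsto_iff_edist_tendsto_0]
  simpa only [edist_comm _ (π x), hπ] using hf₀ x

/-- a locally Lipschitz map from a connected, rectifiably path connected
length metric space is length-continuous. -/
theorem locallyLipschitz_lengthContinuous {X Y : Type*} [MetricSpace X] [MetricSpace Y]
    [ConnectedSpace X]
    (hlength : ∀ x z : X, edist x z = lengthPd (id : X → X) x z)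
    (hrect : ∀ x z : X, ∃ γ : Path x z, curveELength (fun t => γ t) ≠ ⊤)
    (f : X → Y) (hf : LocallyLipschitz f)
    {W : Type*} [MetricSpace W] (π : X → W)
    (hπ : ∀ x z : X, edist (π x) (π z) = lengthPd f x z) :
    LengthConnected f ∧ Continuous π :=
  locallyLipschitz_lengthContinuous_general hlength f hf π hπ
end

section
/- Let X be a topological space, Z, S ⊆ X closed subsets, Y a metric space, and f : X → Y length-minimizing relative to Z. Then the restriction f|_S : S → Y is length-minimizing relative to ∂S ∪ (Z ∩ S), where ∂S denotes the topological boundary of S in X. -/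
open Set Metric ENNReal unitInterval

/-!
Extend a competitor `h` on `S` by `f` outside `S`. Since `h = f` on `∂S`, the extension `g` is
continuous, and it agrees with `f` on `Z`. It does not lengthen any curve `γ` in `X`: the times
at which `γ` is outside `int S` form a closed set on which `g ∘ γ = f ∘ γ`, while on each
complementary gap `γ` stays in `S`, where `h` does not lengthen curves. Additivity of the
variation over the (possibly infinitely many) gaps gives `ℓ(g ∘ γ) ≤ ℓ(f ∘ γ)`, and the
minimality of `f` turns this into an equality, in particular for curves in `S`.
-/

open Function

section Variation

variable {α Y : Type*} [LinearOrder α] [PseudoEMetricSpace Y]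

theorem eVariationOn_Icc_add_Icc (f : α → Y) {a b c : α} (hab : a ≤ b) (hbc : b ≤ c) :
    eVariationOn f (Icc a b) + eVariationOn f (Icc b c) = eVariationOn f (Icc a c) := by
  simpa using eVariationOn.Icc_add_Icc f (s := univ) hab hbc (mem_univ b)

theorem eVariationOn_Icc_add_edist_le (f : α → Y) {a b c : α} (hab : a ≤ b) (hbc : b ≤ c) :
    eVariationOn f (Icc a b) + edist (f b) (f c) ≤ eVariationOn f (Icc a c) := by
  rw [← eVariationOn_Icc_add_Icc f hab hbc]
  gcongr
  exact eVariationOn.edist_le f (left_mem_Icc.2 hbc) (right_mem_Icc.2 hbc)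

theorem eVariationOn_le_of_add_edist_le {f : α → Y} {s : Set α} {b : α} (hb : IsGreatest s b)
    (V : α → ℝ≥0∞) (hV : ∀ x ∈ s, ∀ y ∈ s, x ≤ y → V x + edist (f x) (f y) ≤ V y) :
    eVariationOn f s ≤ V b := by
  refine iSup_le fun ⟨N, u, hu, us⟩ => ?_
  have hsum : ∀ n, ∑ i ∈ Finset.range n, edist (f (u (i + 1))) (f (u i)) ≤ V (u n) := by
    intro n
    induction n with
    | zero => simp
    | succ n ih =>
      rw [Finset.sum_range_succ, edist_comm]
      exact (add_le_add_left ih _).trans (hV _ (us n) _ (us (n + 1)) (hu n.le_succ))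
  exact (hsum N).trans (le_self_add.trans (hV _ (us N) b hb.1 (hb.2 (us N))))

theorem eVariationOn_comp_clamp (f : α → Y) {s : Set α} {u v : α} (huv : u ≤ v)
    (hs : Icc u v ⊆ s) :
    eVariationOn (fun t => f (max u (min v t))) s = eVariationOn f (Icc u v) := by
  have hmono : MonotoneOn (fun t => max u (min v t)) s :=
    fun x _ y _ hxy => max_le_max le_rfl (min_le_min le_rfl hxy)
  have himage : (fun t => max u (min v t)) '' s = Icc u v := by
    refine Subset.antisymm ?_ fun x hx => ⟨x, hs hx, ?_⟩
    · rintro _ ⟨t, -, rfl⟩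
      exact ⟨le_max_left _ _, max_le huv (min_le_left _ _)⟩
    · simp only [min_eq_right hx.2, max_eq_right hx.1]
  rw [← himage, ← eVariationOn.comp_eq_of_monotoneOn f _ hmono]
  rfl

end Variation

section Gaps

variable {α Y : Type*} [ConditionallyCompleteLinearOrder α] [PseudoEMetricSpace Y]

/-- The left end of the gap of `C` containing `t` (or `a`, if `C` does not meet `[a, t]`). -/
def gapLeft (C : Set α) (a t : α) : α :=
  sSup (insert a (C ∩ Icc a t))

theorem bddAbove_insert_inter_Icc (C : Set α) (a t : α) : BddAbove (insert a (C ∩ Icc a t)) :=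
  bddAbove_insert.2 (bddAbove_Icc.mono inter_subset_right)

theorem le_gapLeft (C : Set α) (a t : α) : a ≤ gapLeft C a t :=
  le_csSup (bddAbove_insert_inter_Icc C a t) (mem_insert _ _)

theorem gapLeft_le (C : Set α) {a t : α} (hat : a ≤ t) : gapLeft C a t ≤ t :=
  csSup_le (insert_nonempty _ _) <| by
    rintro x (rfl | ⟨-, -, hxt⟩)
    exacts [hat, hxt]

theorem gapLeft_mono (C : Set α) (a : α) {t t' : α} (htt' : t ≤ t') :
    gapLeft C a t ≤ gapLeft C a t' :=
  csSup_le_csSup (bddAbove_insert_inter_Icc C a t') (insert_nonempty _ _) <|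
    insert_subset_insert (inter_subset_inter_right _ (Icc_subset_Icc_right htt'))

theorem disjoint_Ioo_gapLeft (C : Set α) (a t : α) : Disjoint (Ioo (gapLeft C a t) t) C := by
  refine disjoint_left.2 fun x hx hxC => hx.1.not_ge ?_
  exact le_csSup (bddAbove_insert_inter_Icc C a t)
    (Or.inr ⟨hxC, (le_gapLeft C a t).trans hx.1.le, hx.2.le⟩)

variable [TopologicalSpace α] [OrderTopology α]

theorem gapLeft_mem {C : Set α} (hC : IsClosed C) (a t : α) :
    gapLeft C a t ∈ insert a (C ∩ Icc a t) :=
  ((isCompact_Icc.inter_left hC).insert a).sSup_mem (insert_nonempty _ _)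

theorem gapLeft_mem_of_lt {C : Set α} (hC : IsClosed C) {a s t : α} (has : a ≤ s)
    (hst : s < gapLeft C a t) : gapLeft C a t ∈ C := by
  rcases gapLeft_mem hC a t with heq | ⟨hC', -⟩
  · exact absurd (heq ▸ hst) has.not_gt
  · exact hC'

/-- Since `C` may have infinitely many gaps, the sum along a partition is bounded point by point,
from left to right, by this running quantity. -/
noncomputable def gapVariation (φ ψ : α → Y) (C : Set α) (a t : α) : ℝ≥0∞ :=
  eVariationOn φ (Icc a (gapLeft C a t)) + eVariationOn ψ (Icc (gapLeft C a t) t)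

variable {φ ψ : α → Y} {C : Set α} {a b : α}

theorem gapVariation_add_edist_le (hC : IsClosed C) (heq : EqOn ψ φ C)
    (hgap : ∀ u v, a ≤ u → u ≤ v → v ≤ b → Disjoint (Ioo u v) C →
      eVariationOn ψ (Icc u v) ≤ eVariationOn φ (Icc u v))
    {s t : α} (has : a ≤ s) (hst : s ≤ t) (htb : t ≤ b) :
    gapVariation φ ψ C a s + edist (ψ s) (ψ t) ≤ gapVariation φ ψ C a t := by
  set p := gapLeft C a s
  set q := gapLeft C a t
  have hap : a ≤ p := le_gapLeft C a s
  have hps : p ≤ s := gapLeft_le C has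
  have hpq : p ≤ q := gapLeft_mono C a hst
  have hqt : q ≤ t := gapLeft_le C (has.trans hst)
  unfold gapVariation
  rcases le_or_gt q s with hqs | hsq
  · have hgap_pq := hgap p q hap hpq (hqt.trans htb)
      ((disjoint_Ioo_gapLeft C a s).mono_left (Ioo_subset_Ioo_right hqs))
    calc eVariationOn φ (Icc a p) + eVariationOn ψ (Icc p s) + edist (ψ s) (ψ t)
        ≤ eVariationOn φ (Icc a p) + eVariationOn ψ (Icc p t) := by
          rw [add_assoc]; gcongr; exact eVariationOn_Icc_add_edist_le ψ hps hst
      _ = eVariationOn φ (Icc a p) + (eVariationOn ψ (Icc p q) + eVariationOn ψ (Icc q t)) := by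
          rw [eVariationOn_Icc_add_Icc ψ hpq hqt]
      _ ≤ eVariationOn φ (Icc a p) + (eVariationOn φ (Icc p q) + eVariationOn ψ (Icc q t)) := by
          gcongr
      _ = eVariationOn φ (Icc a q) + eVariationOn ψ (Icc q t) := by
          rw [← add_assoc, eVariationOn_Icc_add_Icc φ hap hpq]
  · -- `q ∈ C` lies beyond `s`; cross from the gap of `s` into `C` at the first point `r` of `C`
    -- after `s`, so that `ψ = φ` at both ends of `[r, q]`.
    have hqC : q ∈ C := gapLeft_mem_of_lt hC has hsq
    obtain ⟨hrC, hsr, hrq⟩ : sInf (C ∩ Icc s q) ∈ C ∩ Icc s q :=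
      (isCompact_Icc.inter_left hC).sInf_mem ⟨q, hqC, hsq.le, le_rfl⟩
    set r := sInf (C ∩ Icc s q)
    have hgap_pr : Disjoint (Ioo p r) C := by
      refine disjoint_left.2 fun x hx hxC => ?_
      rcases lt_or_ge x s with hxs | hsx
      · exact disjoint_left.1 (disjoint_Ioo_gapLeft C a s) ⟨hx.1, hxs⟩ hxC
      · exact hx.2.not_ge (csInf_le (bddBelow_Icc.mono inter_subset_right)
          ⟨hxC, hsx, hx.2.le.trans hrq⟩)
    have hpr : p ≤ r := hps.trans hsr
    calc eVariationOn φ (Icc a p) + eVariationOn ψ (Icc p s) + edist (ψ s) (ψ t)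
        ≤ eVariationOn φ (Icc a p) + eVariationOn ψ (Icc p s)
            + (edist (ψ s) (ψ r) + edist (φ r) (φ q) + edist (ψ q) (ψ t)) := by
          rw [← heq hrC, ← heq hqC]; gcongr; exact edist_triangle4 _ _ _ _
      _ ≤ eVariationOn φ (Icc a p) + eVariationOn ψ (Icc p r)
            + eVariationOn φ (Icc r q) + eVariationOn ψ (Icc q t) := by
          have h₁ := eVariationOn_Icc_add_edist_le ψ hps hsr
          have h₂ := eVariationOn.edist_le φ (left_mem_Icc.2 hrq) (right_mem_Icc.2 hrq)
          have h₃ := eVariationOn.edist_le ψ (left_mem_Icc.2 hqt) (right_mem_Icc.2 hqt)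
          calc _ = eVariationOn φ (Icc a p) + (eVariationOn ψ (Icc p s) + edist (ψ s) (ψ r))
                  + edist (φ r) (φ q) + edist (ψ q) (ψ t) := by ring
            _ ≤ _ := by gcongr
      _ ≤ eVariationOn φ (Icc a p) + eVariationOn φ (Icc p r)
            + eVariationOn φ (Icc r q) + eVariationOn ψ (Icc q t) := by
          gcongr
          exact hgap p r hap hpr (hrq.trans (hqt.trans htb)) hgap_pr
      _ = eVariationOn φ (Icc a q) + eVariationOn ψ (Icc q t) := by
          rw [eVariationOn_Icc_add_Icc φ hap hpr, eVariationOn_Icc_add_Icc φ (hap.trans hpr) hrq]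

theorem eVariationOn_le_of_eqOn_of_gaps (hC : IsClosed C) (heq : EqOn ψ φ C) (hab : a ≤ b)
    (hgap : ∀ u v, a ≤ u → u ≤ v → v ≤ b → Disjoint (Ioo u v) C →
      eVariationOn ψ (Icc u v) ≤ eVariationOn φ (Icc u v)) :
    eVariationOn ψ (Icc a b) ≤ eVariationOn φ (Icc a b) := by
  set p := gapLeft C a b
  have hap : a ≤ p := le_gapLeft C a b
  have hpb : p ≤ b := gapLeft_le C hab
  calc eVariationOn ψ (Icc a b) ≤ gapVariation φ ψ C a b :=
        eVariationOn_le_of_add_edist_le (isGreatest_Icc hab) _ fun s hs t ht hst =>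
          gapVariation_add_edist_le hC heq hgap hs.1 hst ht.2
    _ ≤ eVariationOn φ (Icc a p) + eVariationOn φ (Icc p b) := by
        unfold gapVariation
        gcongr
        exact hgap p b hap hpb le_rfl (disjoint_Ioo_gapLeft C a b)
    _ = eVariationOn φ (Icc a b) := eVariationOn_Icc_add_Icc φ hap hpb

end Gaps

section Extension

variable {X Y : Type*} [TopologicalSpace X]

theorem extend_val_eq_of_notMem_interior {S : Set X} {f : X → Y} {h : S → Y}
    (hfr : ∀ x : S, (x : X) ∉ interior S → h x = f x) {x : X} (hx : x ∉ interior S) :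
    extend Subtype.val h f x = f x := by
  by_cases hxS : x ∈ S
  · exact (Subtype.val_injective.extend_apply h f ⟨x, hxS⟩).trans (hfr ⟨x, hxS⟩ hx)
  · exact extend_apply' _ _ _ fun ⟨y, hy⟩ => hxS (hy ▸ y.2)

theorem continuous_extend_val [TopologicalSpace Y] {S : Set X} (hS : IsClosed S) {f : X → Y}
    (hf : Continuous f) {h : S → Y} (hh : Continuous h)
    (hfr : ∀ x : S, (x : X) ∉ interior S → h x = f x) :
    Continuous (extend Subtype.val h f) := by
  have hcS : ContinuousOn (extend Subtype.val h f) S := by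
    rw [continuousOn_iff_continuous_domRestrict]
    convert hh using 1
    exact funext (Subtype.val_injective.extend_apply h f)
  have hcSc : ContinuousOn (extend Subtype.val h f) (closure Sᶜ) :=
    hf.continuousOn.congr fun x hx =>
      extend_val_eq_of_notMem_interior hfr (by rwa [closure_compl] at hx)
  refine continuousOn_univ.1 ((hcS.union_of_isClosed hcSc hS isClosed_closure).mono fun x _ => ?_)
  by_cases hx : x ∈ S
  exacts [Or.inl hx, Or.inr (subset_closure hx)]

theorem isShorter_extend_val [PseudoEMetricSpace Y] {S : Set X} (hS : IsClosed S) {f : X → Y}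
    {h : S → Y} (hfr : ∀ x : S, (x : X) ∉ interior S → h x = f x)
    (hh : IsShorter (fun x : S => f x) h) :
    IsShorter f (extend Subtype.val h f) := by
  intro c
  set C : Set I := c ⁻¹' (interior S)ᶜ
  have hcS : ∀ {u v : I}, u < v → Disjoint (Ioo u v) C → ∀ t ∈ Icc u v, c t ∈ S := by
    intro u v huv hdisj t ht
    rw [← closure_Ioo huv.ne] at ht
    refine closure_minimal (fun x hx => ?_) (hS.preimage c.continuous) ht
    exact interior_subset (s := S) (not_not.1 (disjoint_left.1 hdisj hx))
  have hgap : ∀ u v : I, ⊥ ≤ u → u ≤ v → v ≤ ⊤ → Disjoint (Ioo u v) C →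
      eVariationOn (fun t => extend Subtype.val h f (c t)) (Icc u v) ≤
        eVariationOn (fun t => f (c t)) (Icc u v) := by
    rintro u v - huv - hdisj
    rcases huv.eq_or_lt with rfl | huv
    · simp [eVariationOn.subsingleton]
    · let d : C(I, S) := ⟨fun t => ⟨c (max u (min v t)),
        hcS huv hdisj _ ⟨le_max_left _ _, max_le huv.le (min_le_left _ _)⟩⟩, by fun_prop⟩
      rw [← eVariationOn_comp_clamp _ huv.le (subset_univ _),
        ← eVariationOn_comp_clamp _ huv.le (subset_univ _)]
      exact (congrArg curveELength
        (funext fun t => Subtype.val_injective.extend_apply h f (d t))).trans_le (hh d)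
  have := eVariationOn_le_of_eqOn_of_gaps ((isOpen_interior.preimage c.continuous).isClosed_compl)
    (fun t ht => extend_val_eq_of_notMem_interior hfr ht) bot_le hgap
  rwa [Icc_bot_top] at this

end Extension

theorem lengthMinimizing_restrict_general {X Y : Type*} [TopologicalSpace X] [MetricSpace Y]
    (Z S : Set X) (hS : IsClosed S) (f : X → Y)
    (hf : LengthMinimizing f Z) :
    LengthMinimizing (fun s : S => f s)
      {s : S | (s : X) ∈ frontier S ∪ (Z ∩ S)} := by
  obtain ⟨hfc, hfmin⟩ := hf
  refine ⟨hfc.comp continuous_subtype_val, fun h hh hfh hshort c => ?_⟩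
  have hfr : ∀ x : S, (x : X) ∉ interior S → h x = f x := fun x hx =>
    (hfh (Or.inl (hS.frontier_eq ▸ ⟨x.2, hx⟩))).symm
  have hfZ : EqOn f (extend Subtype.val h f) Z := by
    intro x hx
    by_cases hxS : x ∈ S
    · exact (hfh (Or.inr ⟨hx, hxS⟩)).trans (Subtype.val_injective.extend_apply h f ⟨x, hxS⟩).symm
    · exact (extend_val_eq_of_notMem_interior hfr fun hx' => hxS (interior_subset hx')).symm
  have := hfmin _ (continuous_extend_val hS hfc hh hfr) hfZ (isShorter_extend_val hS hfr hshort)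
    ((ContinuousMap.mk Subtype.val continuous_subtype_val).comp c)
  simpa [Subtype.val_injective.extend_apply] using this

/-- a restriction of a length-minimizing map to a closed subset `S` is
length-minimizing relative to `∂S ∪ (Z ∩ S)`. -/
theorem lengthMinimizing_restrict {X Y : Type*} [TopologicalSpace X] [MetricSpace Y]
    (Z S : Set X) (hZ : IsClosed Z) (hS : IsClosed S) (f : X → Y)
    (hf : LengthMinimizing f Z) :
    LengthMinimizing (fun s : S => f s)
      {s : S | (s : X) ∈ frontier S ∪ (Z ∩ S)} :=
  lengthMinimizing_restrict_general Z S hS f hf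
end

section
/- Let Y be a metric space and I = [0, a] a closed interval such that C ⊆ Y is the image of an isometric embedding of [0, a] into Y. Then there exists a 1-Lipschitz retraction Φ : Y → C, i.e., a 1-Lipschitz map with Φ(c) = c for all c ∈ C. -/
open Set Metric ENNReal unitInterval

/-- the image of an isometric embedding of a closed interval is a
1-Lipschitz retract of any ambient metric space. -/
theorem interval_is_lipschitz_retract {Y : Type*} [MetricSpace Y] (a : ℝ) (ha : 0 ≤ a)
    (e : Set.Icc (0:ℝ) a → Y) (he : Isometry e) (C : Set Y) (hC : C = Set.range e) :
    ∃ Φ : Y → Y, LipschitzWith 1 Φ ∧ (∀ y : Y, Φ y ∈ C) ∧ ∀ c ∈ C, Φ c = c := by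
  set z : Set.Icc (0:ℝ) a := ⟨0, le_refl 0, ha⟩ with hz
  have hmem : ∀ y : Y, min (dist (e z) y) a ∈ Set.Icc (0:ℝ) a :=
    fun y => ⟨le_min dist_nonneg ha, min_le_right _ _⟩
  refine ⟨fun y => e ⟨min (dist (e z) y) a, hmem y⟩, ?_, ?_, ?_⟩
  · intro y₁ y₂
    rw [edist_dist, edist_dist, he.dist_eq]
    simp only [ENNReal.coe_one, one_mul]
    apply ENNReal.ofReal_le_ofReal
    rw [Subtype.dist_eq, Real.dist_eq]
    simp only [one_mul]
    have : |min (dist (e z) y₁) a - min (dist (e z) y₂) a| ≤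
        |dist (e z) y₁ - dist (e z) y₂| := by
      refine (abs_min_sub_min_le_max _ _ _ _).trans ?_
      simp
    refine this.trans (abs_sub_le_iff.2 ⟨?_, ?_⟩) <;>
      · have := dist_triangle (e z) y₁ y₂
        have := dist_triangle (e z) y₂ y₁
        rw [dist_comm y₂ y₁] at *
        linarith
  · intro y
    rw [hC]
    exact Set.mem_range_self _
  · intro c hc
    rw [hC] at hc
    obtain ⟨t, rfl⟩ := hc
    have hd : dist (e z) (e t) = t.1 := by
      rw [he.dist_eq, Subtype.dist_eq, Real.dist_eq, hz]
      simp [abs_of_nonpos, abs_of_nonneg t.2.1]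
    apply congrArg
    apply Subtype.ext
    simp [hd, min_eq_left t.2.2]
end

section
/- Let Y be a CAT(κ) space and η₀, η₁ : [0,1] → Y rectifiable curves with d_Y(η₀(a), η₁(a)) < R_κ for all a (automatic if κ ≤ 0). Let γ_a be the geodesic from η₀(a) to η₁(a) parametrized proportionally to arclength, and f(a,t) := γ_a(t) the ruled map on Q = [0,1]×[0,1]. Then f is length-minimizing relative to ∂Q: every continuous g : Q → Y agreeing with f on ∂Q and satisfying ℓ_Y(g∘γ) ≤ ℓ_Y(f∘γ) for all curves γ in Q coincides with f. -/
open Set Metric ENNReal unitInterval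

/-!
Fix `a` and let `d = dist (η₀ a) (η₁ a) < R_κ`. A competitor `g` is no longer than `F` on the
vertical segments `{a} × [0, t]` and `{a} × [t, 1]`, so `g (a, t)` lies within `t d` of `η₀ a`
and within `(1 - t) d` of `η₁ a`. The triangle inequality makes both bounds equalities, and the
CAT(κ) comparison with the resulting degenerate model triangle puts `g (a, t)` on the geodesic
`γ_a` at parameter `t`, i.e. at `F (a, t)`.
-/

theorem modelSideLength_self_one (κ b : ℝ) : modelSideLength κ b b 1 = 0 := by
  unfold modelSideLength
  split_ifs
  · simp [show b ^ 2 + b ^ 2 - 2 * b * b = 0 by ring]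
  · simp [← sq]
  · simp [← sq, Real.cosh_sq_sub_sinh_sq]

theorem modelCosAngle_add_self {κ b c : ℝ} (hb : 0 < b) (hc : 0 ≤ c)
    (hκ : 0 < κ → Real.sqrt κ * (b + c) < Real.pi) :
    modelCosAngle κ (b + c) b c = 1 := by
  unfold modelCosAngle
  split_ifs with h0 hpos
  · rw [div_eq_one_iff_eq (by positivity)]; ring
  · have hs : 0 < Real.sqrt κ := Real.sqrt_pos.2 hpos
    have hlt := hκ hpos
    have hsin_bc : 0 < Real.sin (Real.sqrt κ * (b + c)) :=
      Real.sin_pos_of_pos_of_lt_pi (by positivity) hlt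
    have hsin_b : 0 < Real.sin (Real.sqrt κ * b) :=
      Real.sin_pos_of_pos_of_lt_pi (by positivity) (lt_of_le_of_lt (by nlinarith) hlt)
    rw [show Real.sqrt κ * c = Real.sqrt κ * (b + c) - Real.sqrt κ * b by ring, Real.cos_sub,
      div_eq_one_iff_eq (by positivity)]
    ring
  · have hs : 0 < Real.sqrt (-κ) := Real.sqrt_pos.2 (by grind)
    have hsinh_bc : 0 < Real.sinh (Real.sqrt (-κ) * (b + c)) :=
      Real.sinh_pos_iff.2 (by positivity)
    have hsinh_b : 0 < Real.sinh (Real.sqrt (-κ) * b) := Real.sinh_pos_iff.2 (by positivity)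
    rw [show Real.sqrt (-κ) * c = Real.sqrt (-κ) * (b + c) - Real.sqrt (-κ) * b by ring,
      Real.cosh_sub, div_eq_one_iff_eq (by positivity)]
    ring

theorem sqrt_mul_lt_pi_of_ofReal_lt_modelDiam {κ d : ℝ} (hd : ENNReal.ofReal d < modelDiam κ)
    (hκ : 0 < κ) : Real.sqrt κ * d < Real.pi := by
  rw [modelDiam, if_neg hκ.not_ge, ENNReal.ofReal_lt_ofReal_iff'] at hd
  rw [mul_comm, ← lt_div_iff₀ (Real.sqrt_pos.2 hκ)]
  exact hd.1

/-- The comparison triangle is degenerate, so its comparison point for `γ (dist p r)` is `r`. -/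
theorem IsCATSpace.apply_dist_eq_of_dist_add_dist_eq {κ : ℝ} {Y : Type*} [MetricSpace Y]
    (hY : IsCATSpace κ Y) {γ : ℝ → Y} {p q r : Y} (hγ : IsGeodesicParam γ p q)
    (hpq : ENNReal.ofReal (dist p q) < modelDiam κ) (h : dist p r + dist r q = dist p q) :
    γ (dist p r) = r := by
  rcases (dist_nonneg (x := p) (y := r)).eq_or_lt with hpr | hpr
  · rw [← hpr, hγ.1, dist_eq_zero.1 hpr.symm]
  have hperim : ENNReal.ofReal (dist p q + dist q r + dist r p) < 2 * modelDiam κ := by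
    rw [dist_comm q r, dist_comm r p, show dist p q + dist r q + dist p r = 2 * dist p q by
      linarith, ENNReal.ofReal_mul zero_le_two, ENNReal.ofReal_ofNat]
    exact ENNReal.mul_lt_mul_right two_ne_zero ofNat_ne_top hpq
  have hcmp := hY.2.2 p q r γ hγ hperim (dist p r)
    ⟨dist_nonneg, by linarith [dist_nonneg (x := r) (y := q)]⟩
  rw [← h, dist_comm q r, modelCosAngle_add_self hpr dist_nonneg
    (h ▸ sqrt_mul_lt_pi_of_ofReal_lt_modelDiam hpq), modelSideLength_self_one] at hcmp
  exact dist_le_zero.1 hcmp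

theorem eVariationOn_id_unitInterval : eVariationOn (id : I → I) univ = 1 := by
  have hIcc : Icc (0 : I) 1 = univ := eq_univ_of_forall fun x => ⟨x.2.1, x.2.2⟩
  have h := MonotoneOn.eVariationOn_eq (f := Subtype.val) (fun _ _ _ _ h => h)
    (mem_univ (0 : I)) (mem_univ 1)
  rw [univ_inter, hIcc] at h
  exact h.trans (by simp)

theorem curveELength_le_of_lipschitzWith {Y : Type*} [PseudoEMetricSpace Y] {c : I → Y}
    {K : NNReal} (hc : LipschitzWith K c) : curveELength c ≤ K := by
  simpa [curveELength, eVariationOn_id_unitInterval] using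
    hc.lipschitzOnWith.comp_eVariationOn_le (mapsTo_id (univ : Set I))

theorem IsShorter.dist_le_of_lipschitzWith {X Y : Type*} [TopologicalSpace X] [MetricSpace Y]
    {f g : X → Y} (h : IsShorter f g) (c : C(I, X)) {K : NNReal}
    (hK : LipschitzWith K (f ∘ c)) :
    dist (g (c 0)) (g (c 1)) ≤ K := by
  rw [dist_le_coe, ← edist_le_coe]
  calc edist (g (c 0)) (g (c 1)) ≤ curveELength (fun t => g (c t)) :=
        eVariationOn.edist_le _ (mem_univ 0) (mem_univ 1)
    _ ≤ curveELength (fun t => f (c t)) := h c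
    _ ≤ K := curveELength_le_of_lipschitzWith hK

theorem Set.Icc.lipschitzWith_convexComb {a b : ℝ} (x y : Icc a b) :
    LipschitzWith (nndist x y) (Icc.convexComb x y) := by
  refine LipschitzWith.of_dist_le_mul fun s t => le_of_eq ?_
  simp only [Subtype.dist_eq, Real.dist_eq, coe_nndist, Icc.coe_convexComb]
  rw [abs_sub_comm (x : ℝ), ← abs_mul]
  ring_nf

theorem exists_isGeodesicParam_of_dist_eq {Y : Type*} [MetricSpace Y] {x y : Y} {c : I → Y}
    (hc0 : c 0 = x) (hc1 : c 1 = y)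
    (hc : ∀ s t : I, dist (c s) (c t) = |(s : ℝ) - t| * dist x y) :
    ∃ γ : ℝ → Y, IsGeodesicParam γ x y ∧ ∀ t : I, γ (t * dist x y) = c t := by
  rcases (dist_nonneg (x := x) (y := y)).eq_or_lt with hD | hD
  · have hcx : ∀ t, c t = x := fun t => by rw [← hc0, ← dist_eq_zero, hc, ← hD, mul_zero]
    refine ⟨fun _ => x, ⟨rfl, by rw [← hD, dist_eq_zero.1 hD.symm], fun s hs t ht => ?_⟩,
      ?_⟩
    · rw [← hD] at hs ht
      rw [dist_self, le_antisymm hs.2 hs.1, le_antisymm ht.2 ht.1, sub_self, abs_zero]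
    · simp [hcx]
  have hmem : ∀ s ∈ Icc 0 (dist x y), s / dist x y ∈ Icc (0 : ℝ) 1 := fun s hs =>
    ⟨div_nonneg hs.1 hD.le, div_le_one_of_le₀ hs.2 hD.le⟩
  refine ⟨fun s => c (projIcc 0 1 zero_le_one (s / dist x y)), ⟨?_, ?_, fun s hs t ht => ?_⟩,
    fun t => ?_⟩
  · simpa using hc0
  · simpa [div_self hD.ne'] using hc1
  · dsimp only
    rw [projIcc_of_mem _ (hmem s hs), projIcc_of_mem _ (hmem t ht), hc, ← sub_div, abs_div,
      abs_of_pos hD, div_mul_cancel₀ _ hD.ne']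
  · simp [mul_div_cancel_right₀ _ hD.ne']

theorem ruled_map_lengthMinimizing_general {Y : Type*} [MetricSpace Y] (κ : ℝ)
    (hY : IsCATSpace κ Y) (η₀ η₁ : unitInterval → Y)
    (hd : ∀ a : unitInterval, ENNReal.ofReal (dist (η₀ a) (η₁ a)) < modelDiam κ)
    (F : unitInterval × unitInterval → Y)
    (hF0 : ∀ a : unitInterval, F (a, 0) = η₀ a)
    (hF1 : ∀ a : unitInterval, F (a, 1) = η₁ a)
    (hgeo : ∀ a s t : unitInterval,
      dist (F (a, s)) (F (a, t)) = |(s : ℝ) - (t : ℝ)| * dist (η₀ a) (η₁ a)) :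
    ∀ g : unitInterval × unitInterval → Y, Continuous g →
      Set.EqOn F g {p : unitInterval × unitInterval |
        p.1 = 0 ∨ p.1 = 1 ∨ p.2 = 0 ∨ p.2 = 1} →
      IsShorter F g → g = F := by
  intro g _ hFg hsh
  funext ⟨a, t⟩
  have hg0 : g (a, 0) = η₀ a := (hFg (Or.inr (Or.inr (Or.inl rfl)))).symm.trans (hF0 a)
  have hg1 : g (a, 1) = η₁ a := (hFg (Or.inr (Or.inr (Or.inr rfl)))).symm.trans (hF1 a)
  have hlip : LipschitzWith (nndist (η₀ a) (η₁ a)) fun s => F (a, s) :=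
    LipschitzWith.of_dist_le_mul fun s t => by
      rw [hgeo, coe_nndist, Subtype.dist_eq, Real.dist_eq, mul_comm]
  have hvert (t₁ t₂ : I) :
      dist (g (a, t₁)) (g (a, t₂)) ≤ dist (η₀ a) (η₁ a) * |(t₁ : ℝ) - t₂| := by
    have hseg := hsh.dist_le_of_lipschitzWith
      ⟨fun s => (a, Icc.convexComb t₁ t₂ s), by fun_prop⟩
      (hlip.comp (Icc.lipschitzWith_convexComb t₁ t₂))
    simpa only [ContinuousMap.coe_mk, Icc.convexComb_zero, Icc.convexComb_one, NNReal.coe_mul,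
      coe_nndist, Subtype.dist_eq, Real.dist_eq] using hseg
  have h₀ := hvert 0 t
  have h₁ := hvert t 1
  rw [hg0, Icc.coe_zero, zero_sub, abs_neg, abs_of_nonneg t.2.1] at h₀
  rw [hg1, Icc.coe_one, abs_sub_comm, abs_of_nonneg (sub_nonneg.2 t.2.2)] at h₁
  have hsplit :
      dist (η₀ a) (g (a, t)) + dist (g (a, t)) (η₁ a) = dist (η₀ a) (η₁ a) := by
    linarith [dist_triangle (η₀ a) (g (a, t)) (η₁ a)]
  have ht : dist (η₀ a) (g (a, t)) = t * dist (η₀ a) (η₁ a) := by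
    linarith [dist_nonneg (x := g (a, t)) (y := η₁ a)]
  obtain ⟨γ, hγ, hγF⟩ := exists_isGeodesicParam_of_dist_eq (hF0 a) (hF1 a) (hgeo a)
  rw [← hγF t, ← ht, hY.apply_dist_eq_of_dist_add_dist_eq hγ (hd a) hsplit]

/-- the ruled map between two rectifiable curves in a CAT(κ) space is
length-minimizing relative to the boundary of the square. -/
theorem ruled_map_lengthMinimizing {Y : Type*} [MetricSpace Y] (κ : ℝ)
    (hY : IsCATSpace κ Y) (η₀ η₁ : unitInterval → Y)
    (hη₀ : Continuous η₀) (hη₁ : Continuous η₁)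
    (hr₀ : curveELength η₀ ≠ ⊤) (hr₁ : curveELength η₁ ≠ ⊤)
    (hd : ∀ a : unitInterval, ENNReal.ofReal (dist (η₀ a) (η₁ a)) < modelDiam κ)
    (F : unitInterval × unitInterval → Y)
    (hF0 : ∀ a : unitInterval, F (a, 0) = η₀ a)
    (hF1 : ∀ a : unitInterval, F (a, 1) = η₁ a)
    (hgeo : ∀ a s t : unitInterval,
      dist (F (a, s)) (F (a, t)) = |(s : ℝ) - (t : ℝ)| * dist (η₀ a) (η₁ a)) :
    ∀ g : unitInterval × unitInterval → Y, Continuous g →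
      Set.EqOn F g {p : unitInterval × unitInterval |
        p.1 = 0 ∨ p.1 = 1 ∨ p.2 = 0 ∨ p.2 = 1} →
      IsShorter F g → g = F :=
  ruled_map_lengthMinimizing_general κ hY η₀ η₁ hd F hF0 hF1 hgeo
end

section
/- Let Y be a CAT(κ) space and G a closed rectifiable curve in Y of length strictly less than 2·R_κ. Then the image of G is contained in a closed ball of radius r < R_κ/2 in Y. -/
open Set Metric ENNReal unitInterval

/-!
Let `ℓ` be the length of the curve and `p = G 0`, `q = G t₀`, where `G t₀` is the point halfway
along the curve by arc length. Then every point `z` of the curve satisfies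
`d(p, z) + d(z, q) ≤ L := ℓ / 2`. For `κ ≤ 0` this already puts the curve in the ball of radius `L`
about `p`. For `κ > 0` we have `L < R_κ`, so each triangle `p q z` has perimeter `≤ 2L < 2R_κ`, and
CAT(κ) comparison for the midpoint `m` of `[p, q]`, together with the spherical median formula
`cos d(m, z) = (cos x + cos y) / (2 cos (a / 2))` and `cos x + cos y ≥ 2 cos² (L / 2)` (in units
`√κ = 1`), gives `d(m, z) ≤ arccos (cos² (√κ L / 2)) / √κ < R_κ / 2`.
-/

section Variation

variable {α E : Type*} [LinearOrder α] [PseudoMetricSpace E]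

theorem LocallyBoundedVariationOn.dist_add_dist_le_variationOnFromTo {f : α → E} {s : Set α}
    (hf : LocallyBoundedVariationOn f s) {a b c : α} (ha : a ∈ s) (hb : b ∈ s) (hc : c ∈ s)
    (hab : a ≤ b) (hbc : b ≤ c) :
    dist (f a) (f b) + dist (f b) (f c) ≤ variationOnFromTo f s a c := by
  have hdist {x y : α} (hx : x ∈ s) (hy : y ∈ s) (hxy : x ≤ y) :
      dist (f x) (f y) ≤ variationOnFromTo f s x y := by
    rw [variationOnFromTo.eq_of_le f s hxy, dist_edist]
    exact ENNReal.toReal_mono (hf x y hx hy)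
      (eVariationOn.edist_le f ⟨hx, le_rfl, hxy⟩ ⟨hy, hxy, le_rfl⟩)
  rw [← variationOnFromTo.add hf ha hb hc]
  exact add_le_add (hdist ha hb hab) (hdist hb hc hbc)

theorem LocallyBoundedVariationOn.continuous_variationOnFromTo [TopologicalSpace α]
    [OrderTopology α] {f : α → E} (hf : LocallyBoundedVariationOn f univ) (hc : Continuous f)
    (a : α) : Continuous (variationOnFromTo f univ a) := by
  refine continuous_iff_continuousAt.2 fun b ↦ continuousAt_iff_continuous_left'_right'.2 ⟨?_, ?_⟩
  · have := variationOnFromTo.tendsto_left (mem_univ a) (mem_univ b) hf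
      ((hc.tendsto b).mono_left nhdsWithin_le_nhds)
    simpa [ContinuousWithinAt] using this
  · have := variationOnFromTo.tendsto_right (mem_univ a) (mem_univ b) hf
      ((hc.tendsto b).mono_left nhdsWithin_le_nhds)
    simpa [ContinuousWithinAt] using this

end Variation

theorem exists_dist_add_dist_le_half_curveELength {Y : Type*} [PseudoMetricSpace Y]
    {G : unitInterval → Y} (hG : Continuous G) (hclosed : G 0 = G 1)
    (hfin : curveELength G ≠ ⊤) :
    ∃ t₀, ∀ s, dist (G 0) (G s) + dist (G s) (G t₀) ≤ (curveELength G).toReal / 2 := by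
  have hbv : LocallyBoundedVariationOn G univ :=
    BoundedVariationOn.locallyBoundedVariationOn hfin
  have hvar0 : variationOnFromTo G univ 0 0 = 0 := variationOnFromTo.self G univ 0
  have hvar1 : variationOnFromTo G univ 0 1 = (curveELength G).toReal := by
    have hIcc : univ ∩ Icc (0 : unitInterval) 1 = univ :=
      eq_univ_of_forall fun _ ↦ ⟨mem_univ _, nonneg', le_one'⟩
    rw [variationOnFromTo.eq_of_le G univ zero_le_one, hIcc, curveELength]
  obtain ⟨t₀, ht₀⟩ : (curveELength G).toReal / 2 ∈ range (variationOnFromTo G univ 0) := by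
    refine intermediate_value_univ 0 1 (hbv.continuous_variationOnFromTo hG 0) ?_
    rw [hvar0, hvar1]
    constructor <;> linarith [ENNReal.toReal_nonneg (a := curveELength G)]
  refine ⟨t₀, fun s ↦ ?_⟩
  rcases le_total s t₀ with hs | hs
  · rw [← ht₀]
    exact hbv.dist_add_dist_le_variationOnFromTo (mem_univ _) (mem_univ _) (mem_univ _)
      nonneg' hs
  · have h := hbv.dist_add_dist_le_variationOnFromTo (mem_univ t₀) (mem_univ s) (mem_univ 1) hs
      le_one'
    rw [← variationOnFromTo.sub_right hbv (mem_univ 0) (mem_univ 1) (mem_univ t₀), ht₀,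
      hvar1] at h
    rw [hclosed, dist_comm (G 1), add_comm, dist_comm (G s)]
    linarith

open Real

theorem cos_sq_half_le_cos_add_cos_div_two {M X Y : ℝ} (hX : 0 ≤ X) (hY : 0 ≤ Y)
    (hXY : X + Y ≤ M) (hM : M < π) : cos (M / 2) ^ 2 ≤ (cos X + cos Y) / 2 := by
  have hc : 0 ≤ cos (M / 2) := cos_nonneg_of_neg_pi_div_two_le_of_le (by linarith) (by linarith)
  have hsum : cos (M / 2) ≤ cos ((X + Y) / 2) :=
    cos_le_cos_of_nonneg_of_le_pi (by positivity) (by linarith) (by linarith)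
  have hdiff : cos (M / 2) ≤ cos ((X - Y) / 2) := by
    rw [← cos_abs ((X - Y) / 2)]
    refine cos_le_cos_of_nonneg_of_le_pi (abs_nonneg _) (by linarith) ?_
    rw [abs_le]
    constructor <;> linarith
  rw [cos_add_cos, sq]
  nlinarith [mul_le_mul hsum hdiff hc (hc.trans hsum)]

/-- For `κ > 0`, a bound in `M_κ` on the distance from the midpoint of `[p, q]` to any point of
the ellipse `d(p, z) + d(z, q) ≤ L`. -/
noncomputable def modelEllipseRadius (κ L : ℝ) : ℝ :=
  arccos (cos (√κ * L / 2) ^ 2) / √κ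

section ModelEllipseRadius

variable {κ L : ℝ}

theorem cos_sqrt_mul_half_pos (hL : 0 ≤ L) (hLR : √κ * L < π) : 0 < cos (√κ * L / 2) :=
  cos_pos_of_mem_Ioo ⟨by nlinarith [sqrt_nonneg κ, pi_pos], by linarith⟩

theorem half_le_modelEllipseRadius (hκ : 0 < κ) (hL : 0 ≤ L) (hLR : √κ * L < π) :
    L / 2 ≤ modelEllipseRadius κ L := by
  have hc := cos_sqrt_mul_half_pos hL hLR
  have hsq : cos (√κ * L / 2) ^ 2 ≤ cos (√κ * L / 2) := by
    nlinarith [cos_le_one (√κ * L / 2)]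
  rw [modelEllipseRadius, le_div_iff₀ (sqrt_pos.2 hκ)]
  calc L / 2 * √κ = arccos (cos (√κ * L / 2)) := by
        rw [arccos_cos (by positivity) (by linarith [pi_pos])]; ring
    _ ≤ arccos (cos (√κ * L / 2) ^ 2) := arccos_le_arccos hsq

theorem modelEllipseRadius_lt (hκ : 0 < κ) (hL : 0 ≤ L) (hLR : √κ * L < π) :
    modelEllipseRadius κ L < π / √κ / 2 := by
  have harccos : arccos (cos (√κ * L / 2) ^ 2) < π / 2 :=
    arccos_lt_pi_div_two.2 (pow_pos (cos_sqrt_mul_half_pos hL hLR) 2)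
  rw [modelEllipseRadius, div_right_comm]
  exact div_lt_div_of_pos_right harccos (sqrt_pos.2 hκ)

end ModelEllipseRadius

/-- The spherical median formula. -/
theorem modelSideLength_half_modelCosAngle {κ a x y : ℝ} (hκ : 0 < κ)
    (hsin : sin (√κ * (a / 2)) ≠ 0) (hcos : cos (√κ * (a / 2)) ≠ 0) (hx : sin (√κ * x) ≠ 0) :
    modelSideLength κ (a / 2) x (modelCosAngle κ a x y) =
      arccos ((cos (√κ * x) + cos (√κ * y)) / (2 * cos (√κ * (a / 2)))) / √κ := by
  rw [modelSideLength, if_neg hκ.ne', if_pos hκ, modelCosAngle, if_neg hκ.ne', if_pos hκ,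
    show √κ * a = 2 * (√κ * (a / 2)) by ring, sin_two_mul, cos_two_mul]
  generalize √κ * (a / 2) = A at hsin hcos ⊢
  generalize √κ * x = X at hx ⊢
  congr 2
  field_simp
  ring

theorem modelSideLength_half_modelCosAngle_le_modelEllipseRadius {κ L a x y : ℝ} (hκ : 0 < κ)
    (hLR : √κ * L < π) (ha : 0 < a) (haL : a ≤ L) (hx : 0 ≤ x) (hy : 0 ≤ y) (hxy : x + y ≤ L) :
    modelSideLength κ (a / 2) x (modelCosAngle κ a x y) ≤ modelEllipseRadius κ L := by
  have hδ : 0 < √κ := sqrt_pos.2 hκ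
  have hπ := pi_pos
  have ha2 : √κ * (a / 2) < π / 2 := by nlinarith
  rcases hx.eq_or_lt with rfl | hx
  · have h : modelSideLength κ (a / 2) 0 (modelCosAngle κ a 0 y) = a / 2 := by
      rw [modelSideLength, if_neg hκ.ne', if_pos hκ]
      simp only [mul_zero, cos_zero, sin_zero, mul_one, zero_mul, add_zero]
      rw [arccos_cos (by positivity) (by linarith), mul_div_cancel_left₀ _ hδ.ne']
    rw [h]
    linarith [half_le_modelEllipseRadius hκ (ha.le.trans haL) hLR]
  have hcos : 0 < cos (√κ * (a / 2)) := cos_pos_of_mem_Ioo ⟨by nlinarith, ha2⟩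
  rw [modelSideLength_half_modelCosAngle hκ
    (sin_pos_of_pos_of_lt_pi (by positivity) (by linarith)).ne' hcos.ne'
    (sin_pos_of_pos_of_lt_pi (by positivity) (by nlinarith)).ne', modelEllipseRadius]
  refine div_le_div_of_nonneg_right (arccos_le_arccos ?_) hδ.le
  have hmean := cos_sq_half_le_cos_add_cos_div_two (M := √κ * L) (X := √κ * x) (Y := √κ * y)
    (by positivity) (by positivity) (by nlinarith) hLR
  calc cos (√κ * L / 2) ^ 2 ≤ (cos (√κ * x) + cos (√κ * y)) / 2 := hmean
    _ ≤ (cos (√κ * x) + cos (√κ * y)) / (2 * cos (√κ * (a / 2))) :=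
      div_le_div_of_nonneg_left (by nlinarith) (by positivity)
        (by linarith [cos_le_one (√κ * (a / 2))])

theorem modelDiam_of_nonpos {κ : ℝ} (hκ : κ ≤ 0) : modelDiam κ = ⊤ := if_pos hκ

theorem modelDiam_of_pos {κ : ℝ} (hκ : 0 < κ) : modelDiam κ = ENNReal.ofReal (π / √κ) :=
  if_neg hκ.not_ge

theorem sqrt_mul_lt_pi_of_ofReal_lt_modelDiam_s19 {κ L : ℝ} (hκ : 0 < κ)
    (h : ENNReal.ofReal L < modelDiam κ) : √κ * L < π := by
  rw [modelDiam_of_pos hκ, ENNReal.ofReal_lt_ofReal_iff (by positivity),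
    lt_div_iff₀ (sqrt_pos.2 hκ)] at h
  linarith

theorem IsCATSpace.dist_midpoint_le_modelEllipseRadius {Y : Type*} [MetricSpace Y] {κ : ℝ}
    (hY : IsCATSpace κ Y) (hκ : 0 < κ) {p q z : Y} {γ : ℝ → Y} (hγ : IsGeodesicParam γ p q)
    {L : ℝ} (hLR : √κ * L < π) (hz : dist p z + dist z q ≤ L) :
    dist (γ (dist p q / 2)) z ≤ modelEllipseRadius κ L := by
  have hpq : dist p q ≤ L := (dist_triangle p z q).trans hz
  have hL : 0 ≤ L := dist_nonneg.trans hpq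
  rcases (dist_nonneg (x := p) (y := q)).eq_or_lt with hpq0 | hpq0
  · obtain rfl : p = q := dist_eq_zero.1 hpq0.symm
    rw [← hpq0, zero_div, hγ.1]
    linarith [dist_comm z p, half_le_modelEllipseRadius hκ hL hLR]
  have hperim : ENNReal.ofReal (dist p q + dist q z + dist z p) < 2 * modelDiam κ := by
    rw [modelDiam_of_pos hκ, ← ENNReal.ofReal_ofNat 2, ← ENNReal.ofReal_mul zero_le_two,
      ENNReal.ofReal_lt_ofReal_iff (by positivity), ← mul_div_assoc, lt_div_iff₀ (sqrt_pos.2 hκ)]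
    have hsum : dist p q + dist q z + dist z p ≤ 2 * L := by
      linarith [dist_comm z p, dist_comm z q]
    nlinarith [sqrt_pos.2 hκ]
  refine (hY.2.2 p q z γ hγ hperim (dist p q / 2) ⟨by positivity, by linarith⟩).trans ?_
  exact modelSideLength_half_modelCosAngle_le_modelEllipseRadius hκ hLR hpq0 hpq dist_nonneg
    dist_nonneg (by linarith [dist_comm z q])

/-- a closed rectifiable curve of length `< 2 R_κ` in a CAT(κ) space is
contained in a closed ball of radius `r < R_κ/2`. -/
theorem closed_curve_in_small_ball {Y : Type*} [MetricSpace Y] (κ : ℝ)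
    (hY : IsCATSpace κ Y) (G : unitInterval → Y) (hG : Continuous G)
    (hclosed : G 0 = G 1) (hlen : curveELength G < 2 * modelDiam κ) :
    ∃ (y : Y) (r : ℝ), 0 ≤ r ∧ ENNReal.ofReal r < modelDiam κ / 2 ∧
      Set.range G ⊆ Metric.closedBall y r := by
  have hfin : curveELength G ≠ ⊤ := (hlen.trans_le le_top).ne
  obtain ⟨t₀, ht₀⟩ := exists_dist_add_dist_le_half_curveELength hG hclosed hfin
  set L := (curveELength G).toReal / 2
  rcases le_or_gt κ 0 with hκ | hκ
  · refine ⟨G 0, L, by positivity, by simp [modelDiam_of_nonpos hκ, top_div_of_ne_top], ?_⟩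
    rintro _ ⟨s, rfl⟩
    rw [mem_closedBall, dist_comm]
    exact (le_add_of_nonneg_right dist_nonneg).trans (ht₀ s)
  have hLR : √κ * L < π := by
    refine sqrt_mul_lt_pi_of_ofReal_lt_modelDiam_s19 hκ ?_
    rw [ENNReal.ofReal_div_of_pos two_pos, ENNReal.ofReal_toReal hfin, ENNReal.ofReal_ofNat]
    exact ENNReal.div_lt_of_lt_mul' hlen
  obtain ⟨γ, hγ⟩ := hY.2.1 (G 0) (G t₀)
  refine ⟨γ (dist (G 0) (G t₀) / 2), modelEllipseRadius κ L,
    (half_le_modelEllipseRadius hκ (by positivity) hLR).trans' (by positivity), ?_, ?_⟩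
  · rw [modelDiam_of_pos hκ, ← ENNReal.ofReal_ofNat 2, ← ENNReal.ofReal_div_of_pos two_pos]
    exact ENNReal.ofReal_lt_ofReal_iff'.2
      ⟨modelEllipseRadius_lt hκ (by positivity) hLR, by positivity⟩
  · rintro _ ⟨s, rfl⟩
    rw [mem_closedBall, dist_comm]
    exact hY.dist_midpoint_le_modelEllipseRadius hκ hγ hLR (ht₀ s)
end
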